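/- Let k ≥ 1 and let a ∈ ℂ^k be a unit vector. Then for every real ε with 0 ≤ ε ≤ 1/2, the matrix P_sym^{k,2} − ε·(a a^*) ⊗ (a a^*) ∈ M_k(ℂ) ⊗ M_k(ℂ) ≅ M_{k²}(ℂ) is separable. -/

import Mathlib

open Matrix Finset
open scoped Kronecker

/-- The flipOp operator on ℂ^k ⊗ ℂ^k. -/
noncomputable def flipOp (k : ℕ) : Matrix (Fin k × Fin k) (Fin k × Fin k) ℂ :=
  Matrix.of fun p q => if p.1 = q.2 ∧ p.2 = q.1 then 1 else 0

/-- Orthogonal projection onto the symmetric subspace of ℂ^k ⊗ ℂ^k. -/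
noncomputable def psym (k : ℕ) : Matrix (Fin k × Fin k) (Fin k × Fin k) ℂ :=
  (1 / 2 : ℂ) • (1 + flipOp k)

/-- Separability of a matrix in M_k(ℂ) ⊗ M_k(ℂ) ≅ M_{k²}(ℂ). -/
def Separable {k : ℕ} (δ : Matrix (Fin k × Fin k) (Fin k × Fin k) ℂ) : Prop :=
  ∃ (N : ℕ) (x y : Fin N → Fin k → ℂ),
    δ = ∑ i, (Matrix.vecMulVec (x i) (star (x i))) ⊗ₖ (Matrix.vecMulVec (y i) (star (y i)))

/-!
Extend `a` to an orthonormal basis `b₀ = a, b₁, …, b_{k-1}` and, for `g ∈ (ℤ/3)^k`,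
put `φ_g = ∑ₘ ω^{g m} bₘ` with `ω` a primitive cube root of unity. Averaging
`(φ_g φ_g^*)^{⊗2}` over `g` kills every matrix unit `|bₘ bₙ⟩⟨b_u b_v|` except those with
`{m, n} = {u, v}`, so the average is `1 + F - ∑ₘ (bₘ bₘ^*)^{⊗2}`. Hence
`P_sym - ε (a a^*)^{⊗2}` equals
`∑ₘ (1/2 - ε δ_{m0}) (bₘ bₘ^*)^{⊗2} + (2·3^k)⁻¹ ∑_g (φ_g φ_g^*)^{⊗2}`,
a nonnegative combination of product states as soon as `ε ≤ 1/2`.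
-/

open scoped ComplexConjugate

namespace Separable

variable {k : ℕ}

theorem zero : Separable (0 : Matrix (Fin k × Fin k) (Fin k × Fin k) ℂ) :=
  ⟨0, Fin.elim0, Fin.elim0, by simp⟩

theorem kronecker_vecMulVec (x y : Fin k → ℂ) :
    Separable (vecMulVec x (star x) ⊗ₖ vecMulVec y (star y)) :=
  ⟨1, fun _ => x, fun _ => y, by simp⟩

theorem add {δ δ' : Matrix (Fin k × Fin k) (Fin k × Fin k) ℂ}
    (h : Separable δ) (h' : Separable δ') : Separable (δ + δ') := by
  obtain ⟨N, x, y, rfl⟩ := h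
  obtain ⟨M, x', y', rfl⟩ := h'
  exact ⟨N + M, Fin.append x x', Fin.append y y', by simp [Fin.sum_univ_add]⟩

theorem sum {ι : Type*} (s : Finset ι) {δ : ι → Matrix (Fin k × Fin k) (Fin k × Fin k) ℂ}
    (h : ∀ i ∈ s, Separable (δ i)) : Separable (∑ i ∈ s, δ i) := by
  classical
  induction s using Finset.induction_on with
  | empty => simpa using zero
  | insert i s hi ih =>
    rw [Finset.sum_insert hi]
    exact (h i (mem_insert_self i s)).add (ih fun j hj => h j (mem_insert_of_mem hj))

theorem ofReal_smul {δ : Matrix (Fin k × Fin k) (Fin k × Fin k) ℂ} (h : Separable δ) {c : ℝ}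
    (hc : 0 ≤ c) : Separable ((c : ℂ) • δ) := by
  obtain ⟨N, x, y, rfl⟩ := h
  refine ⟨N, fun i => (√c : ℂ) • x i, y, ?_⟩
  have hsq : (√c : ℂ) * (√c : ℂ) = c := by
    rw [← Complex.ofReal_mul, Real.mul_self_sqrt hc]
  simp only [Finset.smul_sum, star_smul, Complex.star_def, Complex.conj_ofReal, smul_vecMulVec,
    vecMulVec_smul, smul_kronecker, smul_smul, hsq]

end Separable

theorem flipOp_mul_kronecker {k : ℕ} (A B : Matrix (Fin k) (Fin k) ℂ) :
    flipOp k * (A ⊗ₖ B) = (B ⊗ₖ A) * flipOp k := by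
  ext ⟨i, j⟩ ⟨p, q⟩
  simp [flipOp, mul_apply, Fintype.sum_prod_type, ite_and, mul_comm]

theorem kronecker_mul_vecMulVec_kronecker_mul_conjTranspose {R l m : Type*} [CommSemiring R]
    [StarRing R] [Fintype m] (U : Matrix l m R) (x y : m → R) :
    (U ⊗ₖ U) * (vecMulVec x (star x) ⊗ₖ vecMulVec y (star y)) * (U ⊗ₖ U)ᴴ =
      vecMulVec (U *ᵥ x) (star (U *ᵥ x)) ⊗ₖ vecMulVec (U *ᵥ y) (star (U *ᵥ y)) := by
  rw [conjTranspose_kronecker, ← mul_kronecker_mul, ← mul_kronecker_mul, mul_vecMulVec,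
    mul_vecMulVec, vecMulVec_mul, vecMulVec_mul, star_mulVec, star_mulVec]

section Unitary

variable {k : ℕ} {U : Matrix (Fin k) (Fin k) ℂ}

theorem kronecker_mul_conjTranspose_self (hU : U ∈ unitaryGroup (Fin k) ℂ) :
    (U ⊗ₖ U) * (U ⊗ₖ U)ᴴ = 1 := by
  rw [conjTranspose_kronecker, ← mul_kronecker_mul, ← star_eq_conjTranspose,
    Unitary.mul_star_self_of_mem hU, one_kronecker_one]

theorem kronecker_mul_flipOp_mul_conjTranspose (hU : U ∈ unitaryGroup (Fin k) ℂ) :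
    (U ⊗ₖ U) * flipOp k * (U ⊗ₖ U)ᴴ = flipOp k := by
  rw [← flipOp_mul_kronecker, mul_assoc, kronecker_mul_conjTranspose_self hU, mul_one]

end Unitary

noncomputable def tensorSquareOuter {k : ℕ} (x : Fin k → ℂ) :
    Matrix (Fin k × Fin k) (Fin k × Fin k) ℂ :=
  vecMulVec x (star x) ⊗ₖ vecMulVec x (star x)

theorem AddChar.map_sum_eq_prod {A M ι : Type*} [AddCommMonoid A] [CommMonoid M]
    (ψ : AddChar A M) (s : Finset ι) (f : ι → A) :
    ψ (∑ i ∈ s, f i) = ∏ i ∈ s, ψ (f i) :=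
  map_prod ψ.toMonoidHom (fun i => Multiplicative.ofAdd (f i)) s

section Phases

variable {R : Type*} [CommRing R] [Fintype R] [DecidableEq R] {ψ : AddChar R ℂ}
  {ι : Type*} [Fintype ι] [DecidableEq ι]

theorem AddChar.sum_apply_dotProduct (hψ : ψ.IsPrimitive) (c : ι → R) :
    ∑ g : ι → R, ψ (c ⬝ᵥ g) =
      if c = 0 then (Fintype.card R : ℂ) ^ Fintype.card ι else 0 := by
  have hcoord : ∀ i, ∑ z : R, ψ (c i * z) = if c i = 0 then (Fintype.card R : ℂ) else 0 := by
    intro i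
    simp_rw [mul_comm (c i)]
    exact_mod_cast AddChar.sum_mulShift _ hψ
  simp_rw [dotProduct, AddChar.map_sum_eq_prod]
  rw [← Fintype.prod_sum fun i z => ψ (c i * z)]
  simp_rw [hcoord, Fintype.prod_ite_zero, Finset.prod_const, Finset.card_univ, funext_iff,
    Pi.zero_apply]

/-- For `R = ZMod 2` (real signs) the terms with `m = n` and `u = v` would survive as well. -/
theorem AddChar.sum_apply_mul_apply_mul_conj_mul_conj (hψ : ψ.IsPrimitive)
    (h2 : (2 : R) ≠ 0) (m n u v : ι) :
    ∑ g : ι → R, ψ (g m) * ψ (g n) * conj (ψ (g u)) * conj (ψ (g v)) =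
      if m = u ∧ n = v ∨ m = v ∧ n = u then (Fintype.card R : ℂ) ^ Fintype.card ι
      else 0 := by
  have h1 : (1 : R) ≠ 0 := fun h => h2 (by rw [← one_add_one_eq_two, h, add_zero])
  have hphase : ∀ g : ι → R, ψ (g m) * ψ (g n) * conj (ψ (g u)) * conj (ψ (g v)) =
      ψ ((Pi.single m 1 + Pi.single n 1 - (Pi.single u 1 + Pi.single v 1)) ⬝ᵥ g) := by
    intro g
    rw [← AddChar.map_neg_eq_conj, ← AddChar.map_neg_eq_conj]
    simp only [← AddChar.map_add_eq_mul, sub_dotProduct,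
      add_dotProduct, single_dotProduct, one_mul]
    congr 1
    abel
  simp_rw [hphase, AddChar.sum_apply_dotProduct hψ, sub_eq_zero,
    Pi.single_add_single_eq_single_add_single h1 h1, one_add_one_eq_two, h2]
  simp

theorem sum_tensorSquareOuter_addChar (hψ : ψ.IsPrimitive) (h2 : (2 : R) ≠ 0) (k : ℕ) :
    ∑ g : Fin k → R, tensorSquareOuter (ψ ∘ g) =
      (Fintype.card R : ℂ) ^ k •
        (1 + flipOp k - ∑ m : Fin k, tensorSquareOuter (Pi.single m 1)) := by
  ext ⟨i, j⟩ ⟨p, q⟩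
  have hmoment := AddChar.sum_apply_mul_apply_mul_conj_mul_conj hψ h2 i j p q
  simp only [Fintype.card_fin] at hmoment
  simp only [tensorSquareOuter, Matrix.sum_apply, kroneckerMap_apply, vecMulVec_apply,
    Function.comp_apply, Pi.star_apply, Complex.star_def, Matrix.smul_apply, Matrix.sub_apply,
    Matrix.add_apply, one_apply, flipOp, of_apply, smul_eq_mul]
  have hreorder : ∀ g : Fin k → R, ψ (g i) * conj (ψ (g p)) * (ψ (g j) * conj (ψ (g q))) =
      ψ (g i) * ψ (g j) * conj (ψ (g p)) * conj (ψ (g q)) := fun g => by ring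
  simp only [hreorder, hmoment]
  simp only [Pi.single_apply, Prod.ext_iff, apply_ite (starRingEnd ℂ), map_one, map_zero]
  simp only [mul_ite, mul_one, mul_zero, Finset.sum_ite_eq, Finset.mem_univ, if_true]
  split_ifs <;> grind

theorem sum_tensorSquareOuter_mulVec_addChar (hψ : ψ.IsPrimitive) (h2 : (2 : R) ≠ 0) {k : ℕ}
    {U : Matrix (Fin k) (Fin k) ℂ} (hU : U ∈ unitaryGroup (Fin k) ℂ) :
    ∑ g : Fin k → R, tensorSquareOuter (U *ᵥ (ψ ∘ g)) =
      (Fintype.card R : ℂ) ^ k •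
        (1 + flipOp k - ∑ m : Fin k, tensorSquareOuter (U *ᵥ Pi.single m 1)) := by
  have h := congrArg (fun X => (U ⊗ₖ U) * X * (U ⊗ₖ U)ᴴ)
    (sum_tensorSquareOuter_addChar hψ h2 k)
  simpa only [Finset.mul_sum, Finset.sum_mul, mul_smul_comm, smul_mul_assoc, mul_sub, sub_mul,
    mul_add, add_mul, mul_one, kronecker_mul_conjTranspose_self hU,
    kronecker_mul_flipOp_mul_conjTranspose hU,
    tensorSquareOuter, kronecker_mul_vecMulVec_kronecker_mul_conjTranspose] using h

end Phases

theorem exists_mem_unitaryGroup_mulVec_single_eq {ι : Type*} [Fintype ι] [DecidableEq ι]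
    (i₀ : ι) {a : ι → ℂ} (ha : ∑ i, Complex.normSq (a i) = 1) :
    ∃ U ∈ unitaryGroup ι ℂ, U *ᵥ Pi.single i₀ 1 = a := by
  have hnorm : ‖WithLp.toLp 2 a‖ = 1 := by
    simp [EuclideanSpace.norm_eq, ← Complex.normSq_eq_norm_sq, ha]
  have hon : Orthonormal ℂ (Set.domRestrict {i₀} fun _ => WithLp.toLp 2 a) :=
    orthonormal_subsingleton_iff.mpr fun _ => hnorm
  obtain ⟨b, hb⟩ := hon.exists_orthonormalBasis_extension_of_card_eq (by simp)
  refine ⟨(EuclideanSpace.basisFun ι ℂ).toBasis.toMatrix b,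
    (EuclideanSpace.basisFun ι ℂ).toMatrix_orthonormalBasis_mem_unitary b, ?_⟩
  ext i
  rw [mulVec_single_one, col_apply, Module.Basis.toMatrix_apply, hb i₀ rfl]
  rfl

theorem psym_sub_smul_tensorSquareOuter_eq {k : ℕ} [NeZero k] {U : Matrix (Fin k) (Fin k) ℂ}
    (hU : U ∈ unitaryGroup (Fin k) ℂ) (ε : ℝ) :
    psym k - (ε : ℂ) • tensorSquareOuter (U *ᵥ Pi.single 0 1) =
      ∑ m, ((if m = 0 then 1 / 2 - ε else 1 / 2 : ℝ) : ℂ) •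
          tensorSquareOuter (U *ᵥ Pi.single m 1) +
        (((2 * 3 ^ k)⁻¹ : ℝ) : ℂ) •
          ∑ g : Fin k → ZMod 3, tensorSquareOuter (U *ᵥ (ZMod.stdAddChar ∘ g)) := by
  have htwirl := sum_tensorSquareOuter_mulVec_addChar (ZMod.isPrimitive_stdAddChar 3)
    (by decide) hU
  have hcoef : ∀ m : Fin k, ((if m = 0 then 1 / 2 - ε else 1 / 2 : ℝ) : ℂ) =
      1 / 2 - if m = 0 then (ε : ℂ) else 0 := fun m => by split_ifs <;> push_cast <;> ring
  have hscale : (((2 * 3 ^ k)⁻¹ : ℝ) : ℂ) * Fintype.card (ZMod 3) ^ k = 1 / 2 := by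
    push_cast [ZMod.card]
    field_simp
  simp only [hcoef, sub_smul, ite_smul, zero_smul, Finset.sum_sub_distrib, Finset.sum_ite_eq',
    Finset.mem_univ, if_true, ← Finset.smul_sum, htwirl, smul_smul, hscale, psym]
  module

theorem psym_minus_product_separable (k : ℕ) (hk : 1 ≤ k) (a : Fin k → ℂ)
    (ha : ∑ i, Complex.normSq (a i) = 1) (ε : ℝ) (hε : ε ≤ 1 / 2) :
    Separable (psym k - (ε : ℂ) •
      ((Matrix.vecMulVec a (star a)) ⊗ₖ (Matrix.vecMulVec a (star a)))) := by
  have : NeZero k := ⟨by omega⟩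
  obtain ⟨U, hU, rfl⟩ := exists_mem_unitaryGroup_mulVec_single_eq 0 ha
  change Separable (psym k - (ε : ℂ) • tensorSquareOuter _)
  rw [psym_sub_smul_tensorSquareOuter_eq hU ε]
  refine (Separable.sum _ fun m _ => (Separable.kronecker_vecMulVec _ _).ofReal_smul ?_).add
    ((Separable.sum _ fun g _ => Separable.kronecker_vecMulVec _ _).ofReal_smul (by positivity))
  split_ifs <;> linarith
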